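/- Let R be a commutative ring, Φ : L₁ → L₀ a surjective homomorphism of Lie algebras over R, H₀ a Lie subalgebra of L₀, and H₁ = Φ⁻¹(H₀). Then the induced R-linear isomorphism Φ̄ : L₁⧸H₁ → L₀⧸H₀ (sending the coset of x to the coset of Φ(x)) restricts to a bijection Γ₀(L₁, H₁) → Γ₀(L₀, H₀), and this bijection is an isomorphism of Lie algebras for the brackets on flat elements determined by ⁅π(y), π(y')⁆ = π(⁅y, y'⁆) for representatives y, y' in the respective normalizers. In particular, the pullback map Φ̄* : Γ₀(L₀, H₀) → Γ₀(L₁, H₁), defined as the inverse of this restriction, is an injective morphism of Lie algebras. -/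

import Mathlib

/-!
Since `Φ` is surjective and `H₁ = Φ⁻¹(H₀)`, the first isomorphism theorem for
`L₁ → L₀ → L₀ ⧸ H₀` gives `Φ̄`, and an element `y` normalizes `H₁` exactly when `Φ y` normalizes
`H₀`. Thus the normalizer of `H₁` is the preimage of that of `H₀`, and its image in `L₁ ⧸ H₁`,
the set of flat elements, is carried by `Φ̄` onto the flat elements of `L₀ ⧸ H₀`. Compatibility
with the brackets is just `Φ ⁅y, y'⁆ = ⁅Φ y, Φ y'⁆`.
-/

open Function

namespace LinearMap

variable {R M N : Type*} [Ring R] [AddCommGroup M] [Module R M] [AddCommGroup N] [Module R N]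

noncomputable def quotEquivOfComapEq (f : M →ₗ[R] N) (hf : Surjective f)
    {p : Submodule R M} {q : Submodule R N} (h : q.comap f = p) : (M ⧸ p) ≃ₗ[R] N ⧸ q :=
  (Submodule.quotEquivOfEq _ _ (by rw [ker_comp, Submodule.ker_mkQ, h])).trans
    ((q.mkQ ∘ₗ f).quotKerEquivOfSurjective (q.mkQ_surjective.comp hf))

@[simp]
theorem quotEquivOfComapEq_mk (f : M →ₗ[R] N) (hf : Surjective f) {p : Submodule R M}
    {q : Submodule R N} (h : q.comap f = p) (x : M) :
    f.quotEquivOfComapEq hf h (Submodule.Quotient.mk x) = Submodule.Quotient.mk (f x) :=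
  rfl

end LinearMap

namespace LieSubalgebra

variable {R L L' : Type*} [CommRing R] [LieRing L] [LieAlgebra R L] [LieRing L'] [LieAlgebra R L']

theorem normalizer_comap_of_surjective {Φ : L →ₗ⁅R⁆ L'} (hΦ : Surjective Φ)
    (H : LieSubalgebra R L') : (H.comap Φ).normalizer = H.normalizer.comap Φ := by
  ext y
  simp only [mem_normalizer_iff', mem_comap, hΦ.forall, ← LieHom.map_lie]

/-- The flat elements `Γ₀(L, H)`. -/
def flatElements (H : LieSubalgebra R L) : Set (L ⧸ H.toSubmodule) :=
  Submodule.Quotient.mk '' H.normalizer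

theorem flatElements_eq (H : LieSubalgebra R L) :
    H.flatElements = {yb | ∃ y : L, Submodule.Quotient.mk y = yb ∧ ∀ x ∈ H, ⁅x, y⁆ ∈ H} := by
  ext yb
  simp only [flatElements, Set.mem_image, SetLike.mem_coe, mem_normalizer_iff', Set.mem_ofPred_eq]
  exact exists_congr fun y => and_comm

theorem coe_normalizer_of_coe_eq_preimage {Φ : L →ₗ⁅R⁆ L'} (hΦ : Surjective Φ)
    {H₀ : LieSubalgebra R L'} {H₁ : LieSubalgebra R L} (h : (H₁ : Set L) = Φ ⁻¹' H₀) :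
    (H₁.normalizer : Set L) = Φ ⁻¹' H₀.normalizer := by
  rw [show H₁ = H₀.comap Φ from SetLike.coe_injective h, normalizer_comap_of_surjective hΦ]
  rfl

theorem bijOn_flatElements_of_coe_eq_preimage {Φ : L →ₗ⁅R⁆ L'} (hΦ : Surjective Φ)
    {H₀ : LieSubalgebra R L'} {H₁ : LieSubalgebra R L} (h : (H₁ : Set L) = Φ ⁻¹' H₀) :
    Set.BijOn (Φ.toLinearMap.quotEquivOfComapEq hΦ (SetLike.coe_injective h.symm))
      H₁.flatElements H₀.flatElements := by
  have image_eq : Φ.toLinearMap.quotEquivOfComapEq hΦ (SetLike.coe_injective h.symm) ''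
      H₁.flatElements = H₀.flatElements := by
    simp only [flatElements, Set.image_image, LinearMap.quotEquivOfComapEq_mk,
      LieHom.coe_toLinearMap]
    rw [← Set.image_image Submodule.Quotient.mk Φ, coe_normalizer_of_coe_eq_preimage hΦ h,
      Set.image_preimage_eq _ hΦ]
  exact image_eq ▸ (LinearEquiv.injective _).injOn.bijOn_image

end LieSubalgebra

/-- Let `R` be a commutative ring, `Φ : L₁ → L₀` a surjective homomorphism
of Lie algebras over `R`, `H₀` a Lie subalgebra of `L₀` and `H₁ = Φ⁻¹(H₀)`.  The induced
`R`-linear isomorphism `Φ̄ : L₁⧸H₁ → L₀⧸H₀` (sending the coset of `x` to the coset of `Φ x`)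
restricts to a bijection `Γ₀(L₁, H₁) → Γ₀(L₀, H₀)` between the flat elements, and this
bijection is an isomorphism of Lie algebras for the brackets determined by
`⁅π y, π y'⁆ = π ⁅y, y'⁆` on representatives in the respective normalizers.  In particular
the pullback map `Φ̄* : Γ₀(L₀, H₀) → Γ₀(L₁, H₁)` (the inverse of this restriction) is an
injective morphism of Lie algebras. -/
theorem stmt5 (R : Type*) [CommRing R]
    (L₁ : Type*) [LieRing L₁] [LieAlgebra R L₁]
    (L₀ : Type*) [LieRing L₀] [LieAlgebra R L₀]
    (Φ : L₁ →ₗ⁅R⁆ L₀) (hΦ : Function.Surjective Φ)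
    (H₀ : LieSubalgebra R L₀) (H₁ : LieSubalgebra R L₁)
    (hH₁ : (H₁ : Set L₁) = Φ ⁻¹' (H₀ : Set L₀)) :
    ∃ e : (L₁ ⧸ H₁.toSubmodule) ≃ₗ[R] (L₀ ⧸ H₀.toSubmodule),
      (∀ x : L₁, e (Submodule.Quotient.mk x) = Submodule.Quotient.mk (Φ x)) ∧
      Set.BijOn e
        {yb : L₁ ⧸ H₁.toSubmodule |
          ∃ y : L₁, Submodule.Quotient.mk y = yb ∧ ∀ x ∈ H₁, ⁅x, y⁆ ∈ H₁}
        {yb : L₀ ⧸ H₀.toSubmodule |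
          ∃ y : L₀, Submodule.Quotient.mk y = yb ∧ ∀ x ∈ H₀, ⁅x, y⁆ ∈ H₀} ∧
      (∀ y y' : L₁, (∀ h ∈ H₁, ⁅y, h⁆ ∈ H₁) → (∀ h ∈ H₁, ⁅y', h⁆ ∈ H₁) →
        e (Submodule.Quotient.mk ⁅y, y'⁆) = Submodule.Quotient.mk ⁅Φ y, Φ y'⁆) := by
  refine ⟨Φ.toLinearMap.quotEquivOfComapEq hΦ (SetLike.coe_injective hH₁.symm), fun x => rfl,
    ?_, fun y y' _ _ => by simp⟩
  simpa only [LieSubalgebra.flatElements_eq] using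
    LieSubalgebra.bijOn_flatElements_of_coe_eq_preimage hΦ hH₁
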